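/- arXiv:1401.4384 — 6 statements merged into one kernel-verified Lean document; each statement's English description precedes it below -/
import Mathlib

section
/- Let G and H be graphs such that ⌈ar(G)/2⌉ < ar(H). Then Breaker has a winning strategy in the H-game played on the edge set of G, even when Maker moves first. -/
open scoped Classical

noncomputable section

namespace HGamePaper

/-! ### Maker-Breaker games -/

variable {X : Type*} {α β : Type*}

/-- Auxiliary game predicate: from a position (remaining unclaimed elements `rem`,
the set `claimed` of elements claimed so far by Maker, and a flag `makerTurn`
telling whose move it is), Maker has a strategy to end the game having claimed
all elements of some winning set of `W`.  The fuel is the number of moves left. -/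
def MakerWinsAux [DecidableEq X] (W : Set (Finset X)) :
    ℕ → Finset X → Finset X → Bool → Prop
  | 0, _, claimed, _ => ∃ A ∈ W, A ⊆ claimed
  | (k + 1), rem, claimed, makerTurn =>
      if rem = ∅ then ∃ A ∈ W, A ⊆ claimed
      else if makerTurn then
        ∃ x ∈ rem, MakerWinsAux W k (rem.erase x) (insert x claimed) false
      else
        ∀ x ∈ rem, MakerWinsAux W k (rem.erase x) claimed true

/-- Dual predicate: Breaker has a strategy guaranteeing that at the end of the game
Maker has not claimed all elements of any winning set. -/
def BreakerWinsAux [DecidableEq X] (W : Set (Finset X)) :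
    ℕ → Finset X → Finset X → Bool → Prop
  | 0, _, claimed, _ => ¬ ∃ A ∈ W, A ⊆ claimed
  | (k + 1), rem, claimed, makerTurn =>
      if rem = ∅ then ¬ ∃ A ∈ W, A ⊆ claimed
      else if makerTurn then
        ∀ x ∈ rem, BreakerWinsAux W k (rem.erase x) (insert x claimed) false
      else
        ∃ x ∈ rem, BreakerWinsAux W k (rem.erase x) claimed true

/-- Maker has a winning strategy in the Maker-Breaker game on the board `board`
with winning sets `W`; `makerStarts` records whether Maker makes the first move. -/
def MakerWins [DecidableEq X] (board : Finset X) (W : Set (Finset X))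
    (makerStarts : Bool) : Prop :=
  MakerWinsAux W board.card board ∅ makerStarts

/-- Breaker has a winning strategy in the Maker-Breaker game on the board `board`
with winning sets `W`; `makerStarts` records whether Maker makes the first move. -/
def BreakerWins [DecidableEq X] (board : Finset X) (W : Set (Finset X))
    (makerStarts : Bool) : Prop :=
  BreakerWinsAux W board.card board ∅ makerStarts

/-! ### Copies of a graph and the `H`-game -/

/-- `A` is the edge set of a copy of `H` in `G` (a subgraph of `G` isomorphic to `H`). -/
def IsCopy (H : SimpleGraph β) (G : SimpleGraph α) (A : Set (Sym2 α)) : Prop :=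
  ∃ f : β ↪ α, (∀ u v, H.Adj u v → G.Adj (f u) (f v)) ∧ A = Sym2.map f '' H.edgeSet

/-- The winning sets of the `H`-game: edge sets of copies of `H` in `G`. -/
def copyFinsets (H : SimpleGraph β) (G : SimpleGraph α) : Set (Finset (Sym2 α)) :=
  {A : Finset (Sym2 α) | IsCopy H G ↑A}

/-- Maker (moving first) has a winning strategy in the `H`-game played on the
edge set of `G`. -/
def MakerWinsHGame [Fintype α] (H : SimpleGraph β) (G : SimpleGraph α) : Prop :=
  MakerWins G.edgeSet.toFinset (copyFinsets H G) true

/-- Breaker has a winning strategy in the `H`-game played on the edge set of `G`,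
with Maker moving first. -/
def BreakerWinsHGame [Fintype α] (H : SimpleGraph β) (G : SimpleGraph α) : Prop :=
  BreakerWins G.edgeSet.toFinset (copyFinsets H G) true

/-! ### Densities -/

/-- The number of edges of a graph. -/
def numEdges (G : SimpleGraph α) : ℕ := G.edgeSet.ncard

/-- `d₂(G) = (e_G - 1)/(v_G - 2)`. -/
def d2 (G : SimpleGraph α) : ℝ :=
  ((numEdges G : ℝ) - 1) / ((Nat.card α : ℝ) - 2)

/-- `d₂` of a subgraph. -/
def subD2 {G : SimpleGraph α} (J : G.Subgraph) : ℝ :=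
  ((J.edgeSet.ncard : ℝ) - 1) / ((J.verts.ncard : ℝ) - 2)

/-- The 2-density `m₂(G) = max { d₂(J) : J ⊆ G, v_J ≥ 3 }`. -/
def m2 (G : SimpleGraph α) : ℝ :=
  sSup {x : ℝ | ∃ J : G.Subgraph, 3 ≤ J.verts.ncard ∧ x = subD2 J}

/-- `G` is strictly 2-balanced. -/
def IsStrictlyTwoBalanced (G : SimpleGraph α) : Prop :=
  m2 G = d2 G ∧ ∀ J : G.Subgraph, J ≠ ⊤ → 3 ≤ J.verts.ncard → subD2 J < m2 G

/-- `m(G) = max { e_{G'}/v_{G'} : G' ⊆ G, v_{G'} ≥ 1 }`. -/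
def mDensity (G : SimpleGraph α) : ℝ :=
  sSup {x : ℝ | ∃ J : G.Subgraph, 1 ≤ J.verts.ncard ∧
    x = (J.edgeSet.ncard : ℝ) / (J.verts.ncard : ℝ)}

/-- `ar(G) = max { e_{G'}/(v_{G'} - 1) : G' ⊆ G, v_{G'} ≥ 2 }`. -/
def arDensity (G : SimpleGraph α) : ℝ :=
  sSup {x : ℝ | ∃ J : G.Subgraph, 2 ≤ J.verts.ncard ∧
    x = (J.edgeSet.ncard : ℝ) / ((J.verts.ncard : ℝ) - 1)}

/-- `G` is a triangle, i.e. isomorphic to `K₃`. -/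
def IsTriangle (G : SimpleGraph α) : Prop :=
  Nonempty (G ≃g (⊤ : SimpleGraph (Fin 3)))

/-- The hypothesis of the main theorem: there is a subgraph `H' ⊆ H` with
`d₂(H') = m₂(H)` which is strictly 2-balanced and is neither a tree nor a triangle. -/
def GoodGraph (H : SimpleGraph β) : Prop :=
  ∃ H' : H.Subgraph, d2 H'.coe = m2 H ∧ IsStrictlyTwoBalanced H'.coe ∧
    ¬ H'.coe.IsTree ∧ ¬ IsTriangle H'.coe

/-! ### The random graph `G(n,p)` -/

/-- The probability that the binomial random graph `G(n,p)` satisfies the property `P`. -/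
def gnpProb (n : ℕ) (p : ℝ) (P : SimpleGraph (Fin n) → Prop) : ℝ :=
  ∑ G : SimpleGraph (Fin n),
    if P G then p ^ numEdges G * (1 - p) ^ (n.choose 2 - numEdges G) else 0

/-! ### The graph `H_P` -/

/-- The graph `H_P`: the disjoint union of `H` and a triangle, together with a path of
length 3 (two new internal vertices) joining a triangle vertex to the vertex `v₀` of `H`. -/
def HP (H : SimpleGraph β) (v₀ : β) : SimpleGraph (β ⊕ Fin 5) :=
  SimpleGraph.fromEdgeSet
    ((Sym2.map Sum.inl '' H.edgeSet) ∪
      {s(Sum.inr 0, Sum.inr 1), s(Sum.inr 0, Sum.inr 2), s(Sum.inr 1, Sum.inr 2),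
       s(Sum.inr 0, Sum.inr 3), s(Sum.inr 3, Sum.inr 4), s(Sum.inr 4, Sum.inl v₀)})

/-! ### `H`-cores and `H`-closed subgraphs -/

/-- An edge of `G` is open if it lies in exactly one copy of `H` in `G`. -/
def OpenEdge (H : SimpleGraph β) (G : SimpleGraph α) (e : Sym2 α) : Prop :=
  ∃! A : Set (Sym2 α), IsCopy H G A ∧ e ∈ A

/-- A copy of `H` in `G` (given by its edge set `A`) is unproblematic if it contains
at least two open edges. -/
def Unproblematic (H : SimpleGraph β) (G : SimpleGraph α) (A : Set (Sym2 α)) : Prop :=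
  ∃ e₁ ∈ A, ∃ e₂ ∈ A, e₁ ≠ e₂ ∧ OpenEdge H G e₁ ∧ OpenEdge H G e₂

/-- The defining properties of an `H`-core: every edge lies in a copy of `H`, and
every copy of `H` is problematic. -/
def CoreProps (H : SimpleGraph β) (G' : SimpleGraph α) : Prop :=
  (∀ e ∈ G'.edgeSet, ∃ A, IsCopy H G' A ∧ e ∈ A) ∧
    ∀ A, IsCopy H G' A → ¬ Unproblematic H G' A

/-- `G'` is an `H`-core of `G`: a maximal subgraph of `G` satisfying `CoreProps`. -/
def IsHCore (H : SimpleGraph β) (G G' : SimpleGraph α) : Prop :=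
  G' ≤ G ∧ CoreProps H G' ∧ ∀ G'' : SimpleGraph α, G'' ≤ G → G' ≤ G'' →
    CoreProps H G'' → G'' = G'

/-- `G''` is an `H`-closed subgraph of `core`: every copy of `H` in `core` is either
contained in `G''` or edge-disjoint from it. -/
def IsHClosed (H : SimpleGraph β) (core G'' : SimpleGraph α) : Prop :=
  G'' ≤ core ∧ ∀ A, IsCopy H core A → A ⊆ G''.edgeSet ∨ Disjoint A G''.edgeSet

/-- `G''` is a minimal (nonempty) `H`-closed subgraph of `core`. -/
def IsMinHClosed (H : SimpleGraph β) (core G'' : SimpleGraph α) : Prop :=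
  IsHClosed H core G'' ∧ G''.edgeSet.Nonempty ∧
    ∀ G''' : SimpleGraph α, IsHClosed H core G''' → G'''.edgeSet.Nonempty →
      G''' ≤ G'' → G''' = G''

section ArAux

variable {α : Type*}

/-- indicator: the edge `x` has both endpoints in `S`. -/
def eW (x : Sym2 α) (S : Finset α) : ℕ := if ∀ v ∈ x, v ∈ S then 1 else 0

/-- number of edges of `F` with both endpoints in `S`. -/
def cnt (F : Finset (Sym2 α)) (S : Finset α) : ℕ := ∑ e ∈ F, eW e S

lemma eW_le_one (x : Sym2 α) (S : Finset α) : eW x S ≤ 1 := by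
  unfold eW; split <;> omega

lemma forall_mem_sym2 {a b : α} {S : Finset α} :
    (∀ v ∈ s(a, b), v ∈ S) ↔ a ∈ S ∧ b ∈ S := by
  constructor
  · exact fun h => ⟨h a (Sym2.mem_mk_left a b), h b (Sym2.mem_mk_right a b)⟩
  · rintro ⟨ha, hb⟩ v hv
    rcases Sym2.mem_iff.1 hv with rfl | rfl <;> assumption

lemma eW_supermod (x : Sym2 α) (S T : Finset α) :
    eW x S + eW x T ≤ eW x (S ∩ T) + eW x (S ∪ T) := by
  by_cases hS : ∀ v ∈ x, v ∈ S <;> by_cases hT : ∀ v ∈ x, v ∈ T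
  · have hI : ∀ v ∈ x, v ∈ S ∩ T := fun v hv => Finset.mem_inter.2 ⟨hS v hv, hT v hv⟩
    have hU : ∀ v ∈ x, v ∈ S ∪ T := fun v hv => Finset.mem_union_left _ (hS v hv)
    have h1 : eW x (S ∩ T) = 1 := if_pos hI
    have h2 : eW x (S ∪ T) = 1 := if_pos hU
    have h3 : eW x S ≤ 1 := eW_le_one x S
    have h4 : eW x T ≤ 1 := eW_le_one x T
    omega
  · have hU : ∀ v ∈ x, v ∈ S ∪ T := fun v hv => Finset.mem_union_left _ (hS v hv)
    have h1 : eW x S = 1 := if_pos hS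
    have h2 : eW x T = 0 := if_neg hT
    have h3 : eW x (S ∪ T) = 1 := if_pos hU
    omega
  · have hU : ∀ v ∈ x, v ∈ S ∪ T := fun v hv => Finset.mem_union_right _ (hT v hv)
    have h1 : eW x S = 0 := if_neg hS
    have h2 : eW x T = 1 := if_pos hT
    have h3 : eW x (S ∪ T) = 1 := if_pos hU
    omega
  · have h1 : eW x S = 0 := if_neg hS
    have h2 : eW x T = 0 := if_neg hT
    omega

lemma cnt_supermod (F : Finset (Sym2 α)) (S T : Finset α) :
    cnt F S + cnt F T ≤ cnt F (S ∩ T) + cnt F (S ∪ T) := by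
  unfold cnt
  rw [← Finset.sum_add_distrib, ← Finset.sum_add_distrib]
  exact Finset.sum_le_sum fun e _ => eW_supermod e S T

lemma cnt_eq_filter_card (F : Finset (Sym2 α)) (S : Finset α) :
    cnt F S = (F.filter (fun e => ∀ v ∈ e, v ∈ S)).card :=
  (Finset.card_filter _ _).symm

lemma cnt_erase_le (F : Finset (Sym2 α)) (x : Sym2 α) (S : Finset α) :
    cnt (F.erase x) S ≤ cnt F S :=
  Finset.sum_le_sum_of_subset (Finset.erase_subset _ _)

lemma cnt_erase_add (F : Finset (Sym2 α)) {x : Sym2 α} (hx : x ∈ F) (S : Finset α) :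
    cnt (F.erase x) S + eW x S = cnt F S :=
  Finset.sum_erase_add F _ hx

lemma cnt_insert {F : Finset (Sym2 α)} {x : Sym2 α} (hx : x ∉ F) (S : Finset α) :
    cnt (insert x F) S = eW x S + cnt F S :=
  Finset.sum_insert hx

lemma cnt_pos {F : Finset (Sym2 α)} {S : Finset α} (h : 1 ≤ cnt F S) :
    ∃ y ∈ F, ∀ v ∈ y, v ∈ S := by
  rw [cnt_eq_filter_card] at h
  obtain ⟨y, hy⟩ := Finset.card_pos.1 h
  exact ⟨y, (Finset.mem_filter.1 hy).1, (Finset.mem_filter.1 hy).2⟩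

/-- Breaker's invariant. -/
def Inv (k : ℕ) (rem claimed : Finset (Sym2 α)) : Prop :=
  ∀ S : Finset α, 2 ≤ S.card → 2 * cnt claimed S + cnt rem S ≤ 2 * k * (S.card - 1)

lemma two_mul_sub_sum (k c1 c2 c3 c4 : ℕ) (h : c3 + c4 = c1 + c2)
    (h1 : 1 ≤ c1) (h2 : 1 ≤ c2) (h3 : 1 ≤ c3) (h4 : 1 ≤ c4) :
    2 * k * (c3 - 1) + 2 * k * (c4 - 1) = 2 * k * (c1 - 1) + 2 * k * (c2 - 1) := by
  rw [← Nat.mul_add, ← Nat.mul_add]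
  congr 1
  omega

lemma exists_response {k : ℕ} {x : Sym2 α} (hxd : ¬ x.IsDiag)
    (rem' claimed' : Finset (Sym2 α)) (hne : rem'.Nonempty)
    (hpost : ∀ S : Finset α, 2 ≤ S.card →
      2 * cnt claimed' S + cnt rem' S ≤ 2 * k * (S.card - 1) + 1)
    (hviolx : ∀ S : Finset α, 2 ≤ S.card →
      2 * k * (S.card - 1) + 1 ≤ 2 * cnt claimed' S + cnt rem' S → ∀ v ∈ x, v ∈ S) :
    ∃ y ∈ rem', Inv k (rem'.erase y) claimed' := by
  classical
  by_cases hviol : ∃ S : Finset α, 2 ≤ S.card ∧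
      2 * k * (S.card - 1) + 1 ≤ 2 * cnt claimed' S + cnt rem' S
  · -- there is a violated set; take one of minimum cardinality
    set P : Finset α → Prop := fun S => 2 ≤ S.card ∧
      2 * k * (S.card - 1) + 1 ≤ 2 * cnt claimed' S + cnt rem' S with hP
    have hex : ∃ n : ℕ, ∃ S : Finset α, S.card = n ∧ P S := by
      obtain ⟨S, hS⟩ := hviol; exact ⟨S.card, S, rfl, hS⟩
    obtain ⟨S₀, hS₀card, hS₀⟩ := Nat.find_spec hex
    have hS₀min : ∀ T : Finset α, P T → S₀.card ≤ T.card := by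
      intro T hT
      rw [hS₀card]
      exact Nat.find_min' hex ⟨T, rfl, hT⟩
    -- endpoints of x
    obtain ⟨a, b⟩ := x
    have hab : a ≠ b := by simpa [Sym2.mk_isDiag_iff] using hxd
    -- S₀ is contained in every violated set
    have hsub : ∀ T : Finset α, P T → S₀ ⊆ T := by
      intro T hT
      have hxS : a ∈ S₀ ∧ b ∈ S₀ :=
        forall_mem_sym2.1 (hviolx S₀ hS₀.1 hS₀.2)
      have hxT : a ∈ T ∧ b ∈ T :=
        forall_mem_sym2.1 (hviolx T hT.1 hT.2)
      have hcard2 : 2 ≤ (S₀ ∩ T).card := by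
        have hsub2 : ({a, b} : Finset α) ⊆ S₀ ∩ T := by
          intro v hv
          rcases Finset.mem_insert.1 hv with rfl | hv
          · exact Finset.mem_inter.2 ⟨hxS.1, hxT.1⟩
          · rcases Finset.mem_singleton.1 hv with rfl
            exact Finset.mem_inter.2 ⟨hxS.2, hxT.2⟩
        calc 2 = ({a, b} : Finset α).card := (Finset.card_pair hab).symm
        _ ≤ _ := Finset.card_le_card hsub2
      have hcardU : 2 ≤ (S₀ ∪ T).card :=
        le_trans hS₀.1 (Finset.card_le_card Finset.subset_union_left)
      have hPU := hpost _ hcardU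
      have hsm1 := cnt_supermod claimed' S₀ T
      have hsm2 := cnt_supermod rem' S₀ T
      have hcards := Finset.card_inter_add_card_union S₀ T
      have hPI : P (S₀ ∩ T) := by
        refine ⟨hcard2, ?_⟩
        have h1 := hS₀.2
        have h2 := hT.2
        have e1 : 2 ≤ S₀.card := hS₀.1
        have e2 : 2 ≤ T.card := hT.1
        have hB := two_mul_sub_sum k S₀.card T.card (S₀ ∩ T).card (S₀ ∪ T).card
          (by omega) (by omega) (by omega) (by omega) (by omega)
        omega
      have hle : S₀.card ≤ (S₀ ∩ T).card := hS₀min _ hPI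
      have : S₀ ∩ T = S₀ := Finset.eq_of_subset_of_card_le Finset.inter_subset_left hle
      rw [← this]
      exact Finset.inter_subset_right
    -- there is an unclaimed edge inside S₀
    have hodd : 1 ≤ cnt rem' S₀ := by
      have h1 := hS₀.2
      have h2 := hpost S₀ hS₀.1
      have h3 : 2 * k * (S₀.card - 1) = 2 * (k * (S₀.card - 1)) := by ring
      omega
    obtain ⟨y, hy, hyin⟩ := cnt_pos hodd
    refine ⟨y, hy, ?_⟩
    intro S hScard
    by_cases hPS : P S
    · have hySsub := hsub S hPS
      have hyin' : ∀ v ∈ y, v ∈ S := fun v hv => hySsub (hyin v hv)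
      have heq : cnt (rem'.erase y) S + eW y S = cnt rem' S := cnt_erase_add rem' hy S
      have h1 : eW y S = 1 := if_pos hyin'
      have h2 := hpost S hScard
      omega
    · have h1 : ¬ (2 * k * (S.card - 1) + 1 ≤ 2 * cnt claimed' S + cnt rem' S) :=
        fun hc => hPS ⟨hScard, hc⟩
      have h2 := cnt_erase_le rem' y S
      omega
  · push_neg at hviol
    obtain ⟨y, hy⟩ := hne
    refine ⟨y, hy, ?_⟩
    intro S hScard
    have h1 := hviol S hScard
    have h2 := cnt_erase_le rem' y S
    omega

lemma breaker_inv_wins {k : ℕ} {board : Finset (Sym2 α)} {W : Set (Finset (Sym2 α))}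
    (hboard : ∀ x ∈ board, ¬ x.IsDiag)
    (hsafe : ∀ claimed : Finset (Sym2 α),
      (∀ S : Finset α, 2 ≤ S.card → 2 * cnt claimed S ≤ 2 * k * (S.card - 1) + 1) →
      ¬ ∃ A ∈ W, A ⊆ claimed) :
    ∀ fuel : ℕ, ∀ rem claimed : Finset (Sym2 α), rem.card = fuel → rem ⊆ board →
      Disjoint claimed rem → Inv k rem claimed →
      BreakerWinsAux W fuel rem claimed true := by
  intro fuel
  induction fuel using Nat.strong_induction_on with
  | _ fuel IH =>
    intro rem claimed hcard hsub hdisj hinv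
    match fuel, hcard with
    | 0, hcard =>
      have hrem : rem = ∅ := Finset.card_eq_zero.1 hcard
      subst hrem
      show ¬ ∃ A ∈ W, A ⊆ claimed
      refine hsafe claimed fun S hS => ?_
      have := hinv S hS
      omega
    | (n+1), hcard =>
      have hne : rem ≠ ∅ := by
        intro h; rw [h] at hcard; simp at hcard
      show BreakerWinsAux W (n+1) rem claimed true
      rw [BreakerWinsAux, if_neg hne, if_pos rfl]
      intro x hx
      have hxnc : x ∉ claimed := fun h => Finset.disjoint_left.1 hdisj h hx
      have hxd : ¬ x.IsDiag := hboard x (hsub hx)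
      set rem' := rem.erase x with hrem'
      set claimed' := insert x claimed with hclaimed'
      have hrc : (rem').card = n := by
        rw [hrem', Finset.card_erase_of_mem hx, hcard]
        omega

      have hΦeq : ∀ S : Finset α,
          2 * cnt claimed' S + cnt rem' S = 2 * cnt claimed S + cnt rem S + eW x S := by
        intro S
        have h1 : cnt claimed' S = eW x S + cnt claimed S := cnt_insert hxnc S
        have h2 : cnt rem' S + eW x S = cnt rem S := cnt_erase_add rem hx S
        omega
      have hpost : ∀ S : Finset α, 2 ≤ S.card →
          2 * cnt claimed' S + cnt rem' S ≤ 2 * k * (S.card - 1) + 1 := by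
        intro S hS
        have h1 := hinv S hS
        have h2 := hΦeq S
        have h3 := eW_le_one x S
        omega
      have hviolx : ∀ S : Finset α, 2 ≤ S.card →
          2 * k * (S.card - 1) + 1 ≤ 2 * cnt claimed' S + cnt rem' S → ∀ v ∈ x, v ∈ S := by
        intro S hS hviol
        by_contra hc
        have h0 : eW x S = 0 := if_neg hc
        have h1 := hinv S hS
        have h2 := hΦeq S
        omega
      match n, hrc with
      | 0, hrc =>
        have hrem0 : rem' = ∅ := Finset.card_eq_zero.1 hrc
        show BreakerWinsAux W 0 rem' claimed' false
        show ¬ ∃ A ∈ W, A ⊆ claimed'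
        refine hsafe claimed' fun S hS => ?_
        have := hpost S hS
        omega
      | (m+1), hrc =>
        have hne' : rem' ≠ ∅ := by
          intro h; rw [h] at hrc; simp at hrc
        show BreakerWinsAux W (m+1) rem' claimed' false
        rw [BreakerWinsAux, if_neg hne']
        have : (false = true) = False := by simp
        rw [if_neg (by simp : ¬ (false = true))]
        obtain ⟨y, hy, hinv'⟩ := exists_response hxd rem' claimed'
          (Finset.nonempty_of_ne_empty hne') hpost hviolx
        refine ⟨y, hy, ?_⟩
        refine IH m (by omega) _ _ ?_ ?_ ?_ hinv'
        · rw [Finset.card_erase_of_mem hy, hrc]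
          omega
        · exact fun e he => hsub (Finset.erase_subset _ _ (Finset.erase_subset _ _ he))
        · rw [Finset.disjoint_left]
          intro e he hee
          have he' : e ∈ rem' := Finset.erase_subset _ _ hee
          rcases Finset.mem_insert.1 he with rfl | he2
          · exact (Finset.notMem_erase _ _) he'
          · exact Finset.disjoint_left.1 hdisj he2 (Finset.erase_subset _ _ he')

end ArAux


section DensityAux

variable {α β : Type*}

lemma ar_bddAbove [Fintype α] (G : SimpleGraph α) :
    BddAbove {x : ℝ | ∃ J : G.Subgraph, 2 ≤ J.verts.ncard ∧
      x = (J.edgeSet.ncard : ℝ) / ((J.verts.ncard : ℝ) - 1)} := by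
  refine ⟨(G.edgeSet.ncard : ℝ), ?_⟩
  rintro x ⟨J, hJ, rfl⟩
  have h1 : (1:ℝ) ≤ (J.verts.ncard : ℝ) - 1 := by
    have : (2:ℝ) ≤ (J.verts.ncard : ℝ) := by exact_mod_cast hJ
    linarith
  have h2 : (J.edgeSet.ncard : ℝ) / ((J.verts.ncard : ℝ) - 1) ≤ (J.edgeSet.ncard : ℝ) :=
    div_le_self (by positivity) h1
  have h3 : J.edgeSet.ncard ≤ G.edgeSet.ncard :=
    Set.ncard_le_ncard J.edgeSet_subset (Set.toFinite _)
  exact le_trans h2 (by exact_mod_cast h3)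

lemma ar_nonneg [Fintype α] (G : SimpleGraph α) : 0 ≤ arDensity G := by
  rcases Set.eq_empty_or_nonempty {x : ℝ | ∃ J : G.Subgraph, 2 ≤ J.verts.ncard ∧
      x = (J.edgeSet.ncard : ℝ) / ((J.verts.ncard : ℝ) - 1)} with hset | ⟨x, hx⟩
  · rw [arDensity, hset, Real.sSup_empty]
  · refine le_trans ?_ (le_csSup (ar_bddAbove G) hx)
    obtain ⟨J, hJ, rfl⟩ := hx
    have h1 : (2:ℝ) ≤ (J.verts.ncard : ℝ) := by exact_mod_cast hJ
    exact div_nonneg (Nat.cast_nonneg _) (by linarith)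

/-- The subgraph of `G` induced by a finset `S`. -/
def inducedSub (G : SimpleGraph α) (S : Finset α) : G.Subgraph where
  verts := ↑S
  Adj a b := G.Adj a b ∧ a ∈ S ∧ b ∈ S
  adj_sub h := h.1
  edge_vert h := h.2.1
  symm := ⟨fun a b h => ⟨h.1.symm, h.2.2, h.2.1⟩⟩

lemma cnt_board_le [Fintype α] (G : SimpleGraph α) (k : ℕ)
    (hk : arDensity G ≤ 2 * (k:ℝ)) (S : Finset α) (hS : 2 ≤ S.card) :
    cnt G.edgeSet.toFinset S ≤ 2 * k * (S.card - 1) := by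
  set J : G.Subgraph := inducedSub G S with hJdef
  have hverts : J.verts.ncard = S.card := Set.ncard_coe_finset S
  have hecard : J.edgeSet.ncard = cnt G.edgeSet.toFinset S := by
    rw [Set.ncard_eq_toFinset_card', cnt_eq_filter_card]
    refine congrArg Finset.card ?_
    ext e
    obtain ⟨a, b⟩ := e
    simp only [Set.mem_toFinset, SimpleGraph.Subgraph.mem_edgeSet, Finset.mem_filter,
      SimpleGraph.mem_edgeSet, hJdef, inducedSub, forall_mem_sym2]
    try tauto
  have hmem : ((J.edgeSet.ncard : ℝ) / ((J.verts.ncard : ℝ) - 1)) ∈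
      {x : ℝ | ∃ J : G.Subgraph, 2 ≤ J.verts.ncard ∧
        x = (J.edgeSet.ncard : ℝ) / ((J.verts.ncard : ℝ) - 1)} :=
    ⟨J, by rw [hverts]; exact hS, rfl⟩
  have hle : (J.edgeSet.ncard : ℝ) / ((J.verts.ncard : ℝ) - 1) ≤ arDensity G :=
    le_csSup (ar_bddAbove G) hmem
  rw [hverts, hecard] at hle
  have hpos : (0:ℝ) < (S.card : ℝ) - 1 := by
    have : (2:ℝ) ≤ (S.card : ℝ) := by exact_mod_cast hS
    linarith
  have h2 : (cnt G.edgeSet.toFinset S : ℝ) ≤ 2 * (k:ℝ) * ((S.card : ℝ) - 1) :=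
    (div_le_iff₀ hpos).1 (le_trans hle hk)
  have h3 : ((2 * k * (S.card - 1) : ℕ) : ℝ) = 2 * (k:ℝ) * ((S.card : ℝ) - 1) := by
    push_cast [Nat.cast_sub (show 1 ≤ S.card by omega)]
    ring
  exact_mod_cast h3 ▸ h2

lemma exists_dense_subgraph [Fintype β] (H : SimpleGraph β) (k : ℕ)
    (hk : (k:ℝ) < arDensity H) :
    ∃ J : H.Subgraph, 2 ≤ J.verts.ncard ∧
      k * (J.verts.ncard - 1) + 1 ≤ J.edgeSet.ncard := by
  by_contra hcon
  push_neg at hcon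
  have hall : ∀ x ∈ {x : ℝ | ∃ J : H.Subgraph, 2 ≤ J.verts.ncard ∧
      x = (J.edgeSet.ncard : ℝ) / ((J.verts.ncard : ℝ) - 1)}, x ≤ (k:ℝ) := by
    rintro x ⟨J, hJ, rfl⟩
    have hce := hcon J hJ
    have he : J.edgeSet.ncard ≤ k * (J.verts.ncard - 1) := by omega
    have hpos : (0:ℝ) < (J.verts.ncard : ℝ) - 1 := by
      have : (2:ℝ) ≤ (J.verts.ncard : ℝ) := by exact_mod_cast hJ
      linarith
    rw [div_le_iff₀ hpos]
    calc (J.edgeSet.ncard : ℝ) ≤ ((k * (J.verts.ncard - 1) : ℕ) : ℝ) := by exact_mod_cast he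
      _ = (k:ℝ) * ((J.verts.ncard : ℝ) - 1) := by
          push_cast [Nat.cast_sub (show 1 ≤ J.verts.ncard by omega)]
          ring
  have hle : arDensity H ≤ (k:ℝ) := Real.sSup_le hall (Nat.cast_nonneg k)
  exact absurd hk (not_lt.2 hle)

lemma safe_of_final [Fintype α] [Fintype β] (G : SimpleGraph α) (H : SimpleGraph β) (k : ℕ)
    (J₀ : H.Subgraph) (hv : 2 ≤ J₀.verts.ncard)
    (hE : k * (J₀.verts.ncard - 1) + 1 ≤ J₀.edgeSet.ncard)
    (claimed : Finset (Sym2 α))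
    (hfin : ∀ S : Finset α, 2 ≤ S.card → 2 * cnt claimed S ≤ 2 * k * (S.card - 1) + 1) :
    ¬ ∃ A ∈ copyFinsets H G, A ⊆ claimed := by
  rintro ⟨A, hA, hAsub⟩
  obtain ⟨f, -, hAeq⟩ := hA
  set S : Finset α := J₀.verts.toFinset.image f with hSdef
  have hScard : S.card = J₀.verts.ncard := by
    rw [hSdef, Finset.card_image_of_injective _ f.injective, Set.ncard_eq_toFinset_card']
  set E₀ : Finset (Sym2 α) := J₀.edgeSet.toFinset.image (Sym2.map f) with hE₀def
  have hE₀card : E₀.card = J₀.edgeSet.ncard := by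
    rw [hE₀def, Finset.card_image_of_injective _ (Sym2.map.injective f.injective),
      Set.ncard_eq_toFinset_card']
  have hE₀sub : ∀ e ∈ E₀, e ∈ claimed ∧ eW e S = 1 := by
    intro e he
    rw [hE₀def, Finset.mem_image] at he
    obtain ⟨e', he', rfl⟩ := he
    rw [Set.mem_toFinset] at he'
    have heA : Sym2.map f e' ∈ (↑A : Set (Sym2 α)) := by
      rw [hAeq]
      exact ⟨e', J₀.edgeSet_subset he', rfl⟩
    refine ⟨hAsub (Finset.mem_coe.1 heA), ?_⟩
    obtain ⟨a, b⟩ := e'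
    have hadj : J₀.Adj a b := SimpleGraph.Subgraph.mem_edgeSet.1 he'
    rw [Sym2.map_pair_eq]
    refine if_pos (forall_mem_sym2.2 ⟨?_, ?_⟩)
    · exact Finset.mem_image.2 ⟨a, Set.mem_toFinset.2 (J₀.edge_vert hadj), rfl⟩
    · exact Finset.mem_image.2 ⟨b, Set.mem_toFinset.2 (J₀.edge_vert (J₀.adj_symm hadj)), rfl⟩
  have hcnt : J₀.edgeSet.ncard ≤ cnt claimed S := by
    calc J₀.edgeSet.ncard = E₀.card := hE₀card.symm
      _ = ∑ e ∈ E₀, eW e S := by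
          rw [Finset.sum_congr rfl (fun e he => (hE₀sub e he).2), Finset.sum_const,
            smul_eq_mul, mul_one]
      _ ≤ cnt claimed S :=
          Finset.sum_le_sum_of_subset (fun e he => (hE₀sub e he).1)
  have h2S : 2 ≤ S.card := hScard ▸ hv
  have hfinS := hfin S h2S
  rw [hScard] at hfinS
  have hpar : 2 * k * (J₀.verts.ncard - 1) = 2 * (k * (J₀.verts.ncard - 1)) := by ring
  omega

end DensityAux


/-- If `⌈ar(G)/2⌉ < ar(H)` then Breaker wins the `H`-game on `G`,
even when Maker moves first. -/
theorem breaker_wins_of_arboricity {α β : Type*} [Fintype α] [Fintype β]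
    (G : SimpleGraph α) (H : SimpleGraph β)
    (h : ((⌈arDensity G / 2⌉ : ℤ) : ℝ) < arDensity H) :
    BreakerWinsHGame H G := by
  have h0 : (0:ℝ) ≤ arDensity G / 2 := div_nonneg (ar_nonneg G) (by norm_num)
  set k : ℕ := (⌈arDensity G / 2⌉).toNat with hkdef
  have hkz : (k : ℤ) = ⌈arDensity G / 2⌉ := Int.toNat_of_nonneg (Int.ceil_nonneg h0)
  have hkr : ((k:ℤ):ℝ) = (k:ℝ) := by push_cast; ring
  have hkH : (k:ℝ) < arDensity H := by
    rw [← hkr, hkz]; exact h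
  have hkG : arDensity G ≤ 2 * (k:ℝ) := by
    have h1 : arDensity G / 2 ≤ ((⌈arDensity G / 2⌉ : ℤ) : ℝ) := Int.le_ceil _
    rw [← hkz, hkr] at h1
    linarith
  obtain ⟨J₀, hv₀, hE₀⟩ := exists_dense_subgraph H k hkH
  show BreakerWinsAux (copyFinsets H G) G.edgeSet.toFinset.card G.edgeSet.toFinset ∅ true
  refine breaker_inv_wins (k := k) ?_ ?_ G.edgeSet.toFinset.card G.edgeSet.toFinset ∅ rfl
    subset_rfl (by simp) ?_
  · intro x hx
    exact G.not_isDiag_of_mem_edgeSet (Set.mem_toFinset.1 hx)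
  · exact fun claimed hfin => safe_of_final G H k J₀ hv₀ hE₀ claimed hfin
  · intro S hS
    have h1 : cnt (∅ : Finset (Sym2 α)) S = 0 := by simp [cnt]
    have h2 := cnt_board_le G k hkG S hS
    omega

end HGamePaper
end
end

section
/- Let G and H be graphs such that ⌈m(G)/2⌉ < m(H). Then Breaker has a winning strategy in the H-game played on the edge set of G, even when Maker moves first. -/
open scoped Classical

noncomputable section

namespace HGamePaper

/-! ### Maker-Breaker games -/

variable {X : Type*} {α β : Type*}

/-! ### Auxiliary lemmas for the proof -/

theorem breaker_pairing [DecidableEq X] (W : Set (Finset X)) (σ : X → X)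
    (hσ : ∀ x, σ (σ x) = x)
    (Hgood : ∀ C : Finset X, (∀ x ∈ C, σ x ≠ x → σ x ∉ C) → ¬ ∃ A ∈ W, A ⊆ C) :
    ∀ n (rem claimed : Finset X),
      ((∀ x ∈ claimed, σ x ≠ x → σ x ∉ claimed ∧ σ x ∉ rem) →
        BreakerWinsAux W n rem claimed true) ∧
      (((∀ x ∈ claimed, σ x ≠ x → σ x ∉ claimed) ∧
          ∃ w, ∀ x ∈ claimed, σ x ≠ x → σ x ∈ rem → x = w) →
        BreakerWinsAux W n rem claimed false) := by
  intro n
  induction n with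
  | zero =>
      intro rem claimed
      constructor
      · intro hInv
        exact Hgood claimed (fun x hx hne => (hInv x hx hne).1)
      · intro hInv
        exact Hgood claimed hInv.1
  | succ k ih =>
      intro rem claimed
      constructor
      · -- Maker's turn
        intro hInv
        show BreakerWinsAux W (k+1) rem claimed true
        rw [BreakerWinsAux]
        by_cases hrem : rem = ∅
        · rw [if_pos hrem]
          exact Hgood claimed (fun x hx hne => (hInv x hx hne).1)
        · rw [if_neg hrem, if_pos rfl]
          intro x hx
          apply (ih (rem.erase x) (insert x claimed)).2
          constructor
          · intro y hy hne
            rcases Finset.mem_insert.mp hy with rfl | hy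
            · intro hc
              rcases Finset.mem_insert.mp hc with hc | hc
              · exact hne hc
              · have h2 : σ (σ y) ≠ σ y := by rw [hσ]; exact fun h => hne h.symm
                exact ((hInv (σ y) hc h2).2 (by rwa [hσ])).elim
            · intro hc
              rcases Finset.mem_insert.mp hc with hc | hc
              · exact (hInv y hy hne).2 (hc ▸ hx)
              · exact (hInv y hy hne).1 hc
          · refine ⟨x, fun y hy hne hmem => ?_⟩
            rcases Finset.mem_insert.mp hy with rfl | hy
            · rfl
            · exact ((hInv y hy hne).2 (Finset.mem_of_mem_erase hmem)).elim
      · -- Breaker's turn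
        intro hInv
        show BreakerWinsAux W (k+1) rem claimed false
        rw [BreakerWinsAux]
        by_cases hrem : rem = ∅
        · rw [if_pos hrem]
          exact Hgood claimed hInv.1
        · rw [if_neg hrem, if_neg Bool.false_ne_true]
          by_cases hz : ∃ z ∈ claimed, σ z ≠ z ∧ σ z ∈ rem
          · obtain ⟨z, hzc, hzne, hzr⟩ := hz
            refine ⟨σ z, hzr, ?_⟩
            apply (ih (rem.erase (σ z)) claimed).1
            intro y hy hne
            refine ⟨hInv.1 y hy hne, fun hc => ?_⟩
            obtain ⟨w, hw⟩ := hInv.2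
            have h1 : y = w := hw y hy hne (Finset.mem_of_mem_erase hc)
            have h2 : z = w := hw z hzc hzne hzr
            rw [h1, ← h2] at hc
            exact (Finset.mem_erase.mp hc).1 rfl
          · push_neg at hz
            obtain ⟨x, hx⟩ := Finset.nonempty_iff_ne_empty.mpr hrem
            refine ⟨x, hx, ?_⟩
            apply (ih (rem.erase x) claimed).1
            intro y hy hne
            exact ⟨hInv.1 y hy hne,
              fun hc => hz y hy hne (Finset.mem_of_mem_erase hc)⟩

lemma mSet_bddAbove [Fintype α] (G : SimpleGraph α) :
    BddAbove {x : ℝ | ∃ J : G.Subgraph, 1 ≤ J.verts.ncard ∧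
      x = (J.edgeSet.ncard : ℝ) / (J.verts.ncard : ℝ)} := by
  refine ⟨(G.edgeSet.ncard : ℝ), fun x hx => ?_⟩
  obtain ⟨J, hv, rfl⟩ := hx
  have he : J.edgeSet.ncard ≤ G.edgeSet.ncard :=
    Set.ncard_le_ncard (SimpleGraph.Subgraph.edgeSet_subset J) (Set.toFinite _)
  have h1 : (1 : ℝ) ≤ (J.verts.ncard : ℝ) := by exact_mod_cast hv
  calc (J.edgeSet.ncard : ℝ) / (J.verts.ncard : ℝ) ≤ J.edgeSet.ncard :=
        div_le_self (by positivity) h1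
    _ ≤ _ := by exact_mod_cast he

lemma mDensity_nonneg [Fintype α] (G : SimpleGraph α) : 0 ≤ mDensity G := by
  by_cases hne : {x : ℝ | ∃ J : G.Subgraph, 1 ≤ J.verts.ncard ∧
      x = (J.edgeSet.ncard : ℝ) / (J.verts.ncard : ℝ)}.Nonempty
  · obtain ⟨x, hx⟩ := hne
    obtain ⟨J, hv, rfl⟩ := hx
    have h0 : (0:ℝ) ≤ (J.edgeSet.ncard : ℝ) / (J.verts.ncard : ℝ) :=
      div_nonneg (Nat.cast_nonneg _) (Nat.cast_nonneg _)
    exact le_trans h0 (le_csSup (mSet_bddAbove G) ⟨J, hv, rfl⟩)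
  · rw [mDensity, Set.not_nonempty_iff_eq_empty.mp hne, Real.sSup_empty]

lemma le_mDensity [Fintype α] (G : SimpleGraph α) (J : G.Subgraph)
    (hv : 1 ≤ J.verts.ncard) :
    (J.edgeSet.ncard : ℝ) / (J.verts.ncard : ℝ) ≤ mDensity G :=
  le_csSup (mSet_bddAbove G) ⟨J, hv, rfl⟩

lemma exists_dense_subgraph_s6 [Fintype α] (G : SimpleGraph α) (c : ℝ) (hc : 0 ≤ c)
    (h : c < mDensity G) :
    ∃ J : G.Subgraph, 1 ≤ J.verts.ncard ∧
      c * J.verts.ncard < (J.edgeSet.ncard : ℝ) := by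
  have hne : {x : ℝ | ∃ J : G.Subgraph, 1 ≤ J.verts.ncard ∧
      x = (J.edgeSet.ncard : ℝ) / (J.verts.ncard : ℝ)}.Nonempty := by
    by_contra hne
    rw [mDensity, Set.not_nonempty_iff_eq_empty.mp hne, Real.sSup_empty] at h
    exact absurd h (not_lt.mpr hc)
  obtain ⟨x, ⟨J, hv, rfl⟩, hx⟩ := exists_lt_of_lt_csSup hne h
  refine ⟨J, hv, ?_⟩
  have hvpos : (0 : ℝ) < (J.verts.ncard : ℝ) := by exact_mod_cast hv
  calc c * J.verts.ncard < ((J.edgeSet.ncard : ℝ) / (J.verts.ncard : ℝ)) * J.verts.ncard :=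
        by exact mul_lt_mul_of_pos_right hx hvpos
    _ = _ := div_mul_cancel₀ _ (ne_of_gt hvpos)

lemma exists_head [Fintype α] (G : SimpleGraph α) (kN : ℕ)
    (hmG : mDensity G ≤ 2 * kN) :
    ∃ φ : {e // e ∈ G.edgeSet.toFinset} → α × (Fin kN × Fin 2),
      Function.Injective φ ∧ ∀ e, (φ e).1 ∈ e.1 := by
  set E := G.edgeSet.toFinset with hE
  set t : {e // e ∈ E} → Finset (α × (Fin kN × Fin 2)) :=
    fun e => (Finset.univ.filter (· ∈ e.1)) ×ˢ Finset.univ with ht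
  have hall : ∀ s : Finset {e // e ∈ E}, s.card ≤ (s.biUnion t).card := by
    intro s
    rcases s.eq_empty_or_nonempty with rfl | hs
    · simp
    set sE : Finset (Sym2 α) := s.image (fun e => e.1) with hsE
    set VS : Finset α := sE.biUnion (fun e => Finset.univ.filter (· ∈ e)) with hVS
    have hsEcard : sE.card = s.card := Finset.card_image_of_injective s Subtype.coe_injective
    have hsEadj : ∀ u v : α, s(u, v) ∈ sE → G.Adj u v := by
      intro u v huv
      obtain ⟨e, _, he⟩ := Finset.mem_image.mp huv
      have h2 : e.1 ∈ E := e.2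
      rw [he, hE, Set.mem_toFinset] at h2
      exact h2
    have hvert : ∀ u v : α, s(u, v) ∈ sE → u ∈ VS := by
      intro u v huv
      exact Finset.mem_biUnion.mpr ⟨s(u, v), huv,
        Finset.mem_filter.mpr ⟨Finset.mem_univ _, Sym2.mem_mk_left u v⟩⟩
    set J : G.Subgraph :=
      { verts := ↑VS
        Adj := fun u v => G.Adj u v ∧ s(u, v) ∈ sE
        adj_sub := fun h => h.1
        edge_vert := fun h => hvert _ _ h.2
        symm := ⟨fun u v h => ⟨h.1.symm, by rw [Sym2.eq_swap]; exact h.2⟩⟩ } with hJ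
    have hedge : J.edgeSet = ↑sE := by
      ext e
      induction e using Sym2.ind with
      | _ u v =>
        simp only [SimpleGraph.Subgraph.mem_edgeSet, Finset.mem_coe, hJ]
        exact ⟨fun h => h.2, fun h => ⟨hsEadj u v h, h⟩⟩
    have hVSpos : 1 ≤ VS.card := by
      obtain ⟨e, he⟩ := hs
      have hm : e.1 ∈ sE := Finset.mem_image_of_mem (fun e => e.1) he
      have hum0 : ∀ z : Sym2 α, z ∈ sE → ∃ u v, s(u, v) ∈ sE :=
        fun z => Sym2.ind (fun u v h => ⟨u, v, h⟩) z
      have hum : ∃ u v, s(u, v) ∈ sE := hum0 _ hm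
      obtain ⟨u, v, huv⟩ := hum
      exact Finset.card_pos.mpr ⟨u, hvert u v huv⟩
    have hvcard : J.verts.ncard = VS.card := Set.ncard_coe_finset VS
    have hecard : J.edgeSet.ncard = sE.card := by rw [hedge]; exact Set.ncard_coe_finset sE
    have hdens := le_mDensity G J (by rw [hvcard]; exact hVSpos)
    have hvpos : (0 : ℝ) < (J.verts.ncard : ℝ) := by
      rw [hvcard]; exact_mod_cast hVSpos
    have hreal : (sE.card : ℝ) ≤ 2 * kN * VS.card := by
      have := (div_le_iff₀ hvpos).mp (le_trans hdens hmG)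
      rw [hvcard, hecard] at this
      exact this
    have hnat : sE.card ≤ 2 * kN * VS.card := by exact_mod_cast hreal
    have hbi : s.biUnion t = VS ×ˢ Finset.univ := by
      ext ⟨a, p⟩
      simp only [ht, hVS, hsE, Finset.mem_biUnion, Finset.mem_product, Finset.mem_filter,
        Finset.mem_univ, Finset.mem_image, true_and, and_true]
      constructor
      · rintro ⟨e, he, ha⟩
        exact ⟨e.1, ⟨e, he, rfl⟩, ha⟩
      · rintro ⟨z, ⟨e, he, rfl⟩, ha⟩
        exact ⟨e, he, ha⟩
    rw [hbi, Finset.card_product]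
    have : (Finset.univ : Finset (Fin kN × Fin 2)).card = kN * 2 := by
      simp [Fintype.card_prod]
    rw [this, ← hsEcard]
    calc sE.card ≤ 2 * kN * VS.card := hnat
      _ = VS.card * (kN * 2) := by ring
  obtain ⟨φ, hinj, hmem⟩ := (Finset.all_card_le_biUnion_card_iff_exists_injective t).mp hall
  refine ⟨φ, hinj, fun e => ?_⟩
  have := hmem e
  rw [ht] at this
  exact (Finset.mem_filter.mp (Finset.mem_product.mp this).1).2

lemma exists_pairing {X Y : Type*} (E : Finset X) (φ : {e // e ∈ E} → Y)
    (hinj : Function.Injective φ) (fl : Y → Y) (hfl : ∀ y, fl (fl y) = y) :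
    ∃ σ : X → X, (∀ x, σ (σ x) = x) ∧
      ∀ e e' : {e // e ∈ E}, φ e' = fl (φ e) → σ e.1 = e'.1 := by
  set σ : X → X := fun x => if hx : x ∈ E then
      (if h' : ∃ y : {e // e ∈ E}, φ y = fl (φ ⟨x, hx⟩) then h'.choose.1 else x) else x with hσ
  have key : ∀ e e' : {e // e ∈ E}, φ e' = fl (φ e) → σ e.1 = e'.1 := by
    intro e e' hee
    have hx : e.1 ∈ E := e.2
    have h' : ∃ y : {e // e ∈ E}, φ y = fl (φ ⟨e.1, hx⟩) :=
      ⟨e', by rw [Subtype.coe_eta]; exact hee⟩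
    have h1 : σ e.1 = h'.choose.1 := by
      rw [hσ]; dsimp only; rw [dif_pos hx, dif_pos h']
    have h2 : h'.choose = e' := by
      apply hinj
      rw [h'.choose_spec, Subtype.coe_eta, hee]
    rw [h1, h2]
  refine ⟨σ, ?_, key⟩
  intro x
  by_cases hx : x ∈ E
  · by_cases h' : ∃ y : {e // e ∈ E}, φ y = fl (φ ⟨x, hx⟩)
    · obtain ⟨y, hy⟩ := h'
      have h1 : σ x = y.1 := key ⟨x, hx⟩ y hy
      have h2 : σ y.1 = (⟨x, hx⟩ : {e // e ∈ E}).1 := key y ⟨x, hx⟩ (by rw [hy, hfl])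
      rw [h1, h2]
    · have h0 : σ x = x := by rw [hσ]; dsimp only; rw [dif_pos hx, dif_neg h']
      rw [h0, h0]
  · have h0 : σ x = x := by rw [hσ]; dsimp only; rw [dif_neg hx]
    rw [h0, h0]

lemma hgood_aux [Fintype α] [Fintype β]
    (G : SimpleGraph α) (H : SimpleGraph β) (kN : ℕ)
    (hmH : (kN : ℝ) < mDensity H)
    (φ : {e // e ∈ G.edgeSet.toFinset} → α × (Fin kN × Fin 2))
    (hinj : Function.Injective φ) (hhead : ∀ e, (φ e).1 ∈ e.1)
    (σ : Sym2 α → Sym2 α)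
    (hkey : ∀ e e' : {e // e ∈ G.edgeSet.toFinset},
      φ e' = ((φ e).1, ((φ e).2.1, (φ e).2.2 + 1)) → σ e.1 = e'.1)
    (C : Finset (Sym2 α)) (hC : ∀ x ∈ C, σ x ≠ x → σ x ∉ C) :
    ¬ ∃ A ∈ copyFinsets H G, A ⊆ C := by
  rintro ⟨A, hA, hAC⟩
  obtain ⟨f, hadj, hAeq⟩ := hA
  obtain ⟨J, hv, hkv⟩ := exists_dense_subgraph_s6 H (kN : ℝ) (Nat.cast_nonneg kN) hmH
  have hEfin : J.edgeSet.Finite := Set.toFinite _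
  have hVfin : J.verts.Finite := Set.toFinite _
  set EH : Finset (Sym2 β) := hEfin.toFinset with hEH
  set TF : Finset (Sym2 α) := EH.image (Sym2.map f) with hTF
  set VF : Finset α := hVfin.toFinset.image f with hVF
  have hrep : ∀ es ∈ EH, ∃ u v, es = s(u, v) ∧ J.Adj u v := by
    intro es hes
    rw [hEH, Set.Finite.mem_toFinset] at hes
    revert hes
    exact Sym2.ind (fun u v h => ⟨u, v, rfl, SimpleGraph.Subgraph.mem_edgeSet.mp h⟩) es
  have hTFmem : ∀ z ∈ TF, ∃ u v, z = s(f u, f v) ∧ J.Adj u v := by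
    intro z hz
    obtain ⟨es, hes, rfl⟩ := Finset.mem_image.mp hz
    obtain ⟨u, v, rfl, huv⟩ := hrep es hes
    exact ⟨u, v, by rw [Sym2.map_pair_eq], huv⟩
  have hTF_E : ∀ z ∈ TF, z ∈ G.edgeSet.toFinset := by
    intro z hz
    obtain ⟨u, v, rfl, huv⟩ := hTFmem z hz
    rw [Set.mem_toFinset]
    exact (SimpleGraph.mem_edgeSet G).mpr (hadj u v (J.adj_sub huv))
  have hTF_C : ∀ z ∈ TF, z ∈ C := by
    intro z hz
    obtain ⟨es, hes, rfl⟩ := Finset.mem_image.mp hz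
    rw [hEH, Set.Finite.mem_toFinset] at hes
    have h1 : Sym2.map f es ∈ (↑A : Set (Sym2 α)) := by
      rw [hAeq]
      exact ⟨es, J.edgeSet_subset hes, rfl⟩
    exact hAC h1
  set g : Sym2 α → Option (α × Fin kN) := fun z =>
    if hz : z ∈ G.edgeSet.toFinset then some ((φ ⟨z, hz⟩).1, (φ ⟨z, hz⟩).2.1) else none
    with hg
  have hgval : ∀ z (hz : z ∈ G.edgeSet.toFinset),
      g z = some ((φ ⟨z, hz⟩).1, (φ ⟨z, hz⟩).2.1) := by
    intro z hz
    rw [hg]; dsimp only; rw [dif_pos hz]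
  have hmaps : ∀ z ∈ TF, g z ∈ (VF ×ˢ (Finset.univ : Finset (Fin kN))).image some := by
    intro z hz
    have hzE := hTF_E z hz
    obtain ⟨u, v, hzuv, huv⟩ := hTFmem z hz
    have hh : (φ ⟨z, hzE⟩).1 ∈ z := hhead ⟨z, hzE⟩
    have hh2 : (φ ⟨z, hzE⟩).1 ∈ VF := by
      have hh' : (φ ⟨z, hzE⟩).1 ∈ s(f u, f v) := by rw [← hzuv]; exact hh
      rw [hVF]
      rcases Sym2.mem_iff.mp hh' with h | h
      · exact Finset.mem_image.mpr ⟨u, (Set.Finite.mem_toFinset _).mpr (J.edge_vert huv), h.symm⟩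
      · exact Finset.mem_image.mpr
          ⟨v, (Set.Finite.mem_toFinset _).mpr (J.edge_vert huv.symm), h.symm⟩
    rw [hgval z hzE]
    exact Finset.mem_image.mpr ⟨_, Finset.mem_product.mpr ⟨hh2, Finset.mem_univ _⟩, rfl⟩
  have hinjOn : Set.InjOn g ↑TF := by
    intro z hz z' hz' hgz
    by_contra hne
    have hzE := hTF_E z (Finset.mem_coe.mp hz)
    have hz'E := hTF_E z' (Finset.mem_coe.mp hz')
    rw [hgval z hzE, hgval z' hz'E] at hgz
    simp only [Option.some.injEq, Prod.mk.injEq] at hgz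
    obtain ⟨h1, h2⟩ := hgz
    have hsubne : (⟨z, hzE⟩ : {e // e ∈ G.edgeSet.toFinset}) ≠ ⟨z', hz'E⟩ :=
      fun h => hne (congrArg Subtype.val h)
    have hφne : φ ⟨z, hzE⟩ ≠ φ ⟨z', hz'E⟩ := fun h => hsubne (hinj h)
    have hb : (φ ⟨z, hzE⟩).2.2 ≠ (φ ⟨z', hz'E⟩).2.2 := by
      intro hb
      exact hφne (Prod.ext h1 (Prod.ext h2 hb))
    have hb2 : (φ ⟨z', hz'E⟩).2.2 = (φ ⟨z, hzE⟩).2.2 + 1 :=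
      (by decide : ∀ a b : Fin 2, a ≠ b → b = a + 1) _ _ hb
    have hflip : φ (⟨z', hz'E⟩ : {e // e ∈ G.edgeSet.toFinset}) =
        ((φ ⟨z, hzE⟩).1, ((φ ⟨z, hzE⟩).2.1, (φ ⟨z, hzE⟩).2.2 + 1)) :=
      Prod.ext h1.symm (Prod.ext h2.symm hb2)
    have hσz : σ z = z' := hkey ⟨z, hzE⟩ ⟨z', hz'E⟩ hflip
    have hσne : σ z ≠ z := by rw [hσz]; exact fun h => hne h.symm
    exact hC z (hTF_C z (Finset.mem_coe.mp hz)) hσne (hσz ▸ hTF_C z' (Finset.mem_coe.mp hz'))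
  have hcard : TF.card ≤ VF.card * kN := by
    have h1 : TF.card ≤ ((VF ×ˢ (Finset.univ : Finset (Fin kN))).image some).card :=
      Finset.card_le_card_of_injOn g hmaps hinjOn
    rwa [Finset.card_image_of_injective _ (Option.some_injective _), Finset.card_product,
      Finset.card_univ, Fintype.card_fin] at h1
  have hTFcard : TF.card = J.edgeSet.ncard := by
    rw [hTF, Finset.card_image_of_injective _ (Sym2.map.injective f.injective), hEH,
      ← Set.ncard_eq_toFinset_card]
  have hVFcard : VF.card = J.verts.ncard := by
    rw [hVF, Finset.card_image_of_injective _ f.injective, ← Set.ncard_eq_toFinset_card]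
  have hfin : (J.edgeSet.ncard : ℝ) ≤ (J.verts.ncard : ℝ) * kN := by
    rw [← hTFcard, ← hVFcard]
    exact_mod_cast hcard
  linarith

/-- If `⌈m(G)/2⌉ < m(H)` then Breaker wins the `H`-game on `G`,
even when Maker moves first. -/
theorem breaker_wins_of_density {α β : Type*} [Fintype α] [Fintype β]
    (G : SimpleGraph α) (H : SimpleGraph β)
    (h : ((⌈mDensity G / 2⌉ : ℤ) : ℝ) < mDensity H) :
    BreakerWinsHGame H G := by
  set kZ : ℤ := ⌈mDensity G / 2⌉ with hkZ
  have hmG0 : 0 ≤ mDensity G := mDensity_nonneg G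
  have hk0 : 0 ≤ kZ := Int.ceil_nonneg (div_nonneg hmG0 (by norm_num))
  set kN : ℕ := kZ.toNat with hkN
  have hcast : (kN : ℝ) = (kZ : ℝ) := by
    rw [hkN]; exact_mod_cast congrArg (fun z : ℤ => (z : ℝ)) (Int.toNat_of_nonneg hk0)
  have hmG : mDensity G ≤ 2 * kN := by
    have h1 : mDensity G / 2 ≤ (kZ : ℝ) := Int.le_ceil _
    rw [hcast]; linarith
  have hmH : (kN : ℝ) < mDensity H := by rw [hcast]; exact h
  obtain ⟨φ, hinj, hhead⟩ := exists_head G kN hmG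
  obtain ⟨σ, hσ, hkey⟩ := exists_pairing G.edgeSet.toFinset φ hinj
      (fun p : α × (Fin kN × Fin 2) => (p.1, (p.2.1, p.2.2 + 1)))
      (fun p => Prod.ext rfl (Prod.ext rfl
        ((by decide : ∀ b : Fin 2, b + 1 + 1 = b) _)))
  have Hgood : ∀ C : Finset (Sym2 α), (∀ x ∈ C, σ x ≠ x → σ x ∉ C) →
      ¬ ∃ A ∈ copyFinsets H G, A ⊆ C := fun C hC =>
    hgood_aux G H kN hmH φ hinj hhead σ (fun e e' he => hkey e e' he) C hC
  show BreakerWinsAux (copyFinsets H G) G.edgeSet.toFinset.card G.edgeSet.toFinset ∅ true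
  apply (breaker_pairing (copyFinsets H G) σ hσ Hgood _ _ _).1
  intro x hx
  exact absurd hx (Finset.notMem_empty x)

end HGamePaper
end
end

section
/- For every finite graph G there exists an orientation of the edges of G in which every vertex has outdegree at most ⌈m(G)⌉. -/
open scoped Classical

noncomputable section

namespace HGamePaper

/-! ### Maker-Breaker games -/

variable {X : Type*} {α β : Type*}

/-- Every finite graph `G` admits an orientation of its edges in which
every vertex has outdegree at most `⌈m(G)⌉`. An orientation assigns to each edge one of
its endpoints as head; the outdegree of `v` is the number of edges incident to `v` of
which `v` is not the head. -/
theorem orientation_outdegree_le_ceil_density {α : Type*} [Fintype α]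
    (G : SimpleGraph α) :
    ∃ head : Sym2 α → α, (∀ e ∈ G.edgeSet, head e ∈ e) ∧
      ∀ v : α,
        (({e | e ∈ G.edgeSet ∧ v ∈ e ∧ head e ≠ v}.ncard : ℤ)) ≤ ⌈mDensity G⌉ := by
  classical
  set Dset : Set ℝ := {x : ℝ | ∃ J : G.Subgraph, 1 ≤ J.verts.ncard ∧
    x = (J.edgeSet.ncard : ℝ) / (J.verts.ncard : ℝ)} with hDset
  have hfinSub : Finite G.Subgraph := by
    apply Finite.of_injective (fun J : G.Subgraph => (J.verts, J.Adj))
    intro J1 J2 h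
    exact SimpleGraph.Subgraph.ext (congrArg Prod.fst h) (congrArg Prod.snd h)
  have hfin : Dset.Finite := by
    apply Set.Finite.subset
      (Set.finite_range (fun J : G.Subgraph => (J.edgeSet.ncard : ℝ) / (J.verts.ncard : ℝ)))
    rintro x ⟨J, -, rfl⟩
    exact ⟨J, rfl⟩
  have hbdd : BddAbove Dset := hfin.bddAbove
  have hm0 : 0 ≤ mDensity G := by
    apply Real.sSup_nonneg
    rintro x ⟨J, -, rfl⟩
    positivity
  set k : ℕ := (⌈mDensity G⌉).toNat with hk
  have hkZ : (k : ℤ) = ⌈mDensity G⌉ := Int.toNat_of_nonneg (Int.ceil_nonneg hm0)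
  have hmk : mDensity G ≤ (k : ℝ) := by
    calc mDensity G ≤ (⌈mDensity G⌉ : ℝ) := Int.le_ceil _
    _ = ((k : ℤ) : ℝ) := by rw [hkZ]
    _ = (k : ℝ) := by push_cast; ring
  -- Hall's theorem setup
  set t : {e : Sym2 α // e ∈ G.edgeFinset} → Finset (α × Fin k) :=
    fun e => (Finset.univ.filter (· ∈ e.1)) ×ˢ Finset.univ with ht
  have hall : ∀ s : Finset {e : Sym2 α // e ∈ G.edgeFinset},
      s.card ≤ (s.biUnion t).card := by
    intro s
    set V : Finset α := s.biUnion (fun e => Finset.univ.filter (· ∈ e.1)) with hV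
    have hprod : s.biUnion t = V ×ˢ Finset.univ := by
      ext ⟨a, i⟩
      simp [ht, hV, Finset.mem_biUnion, Finset.mem_product]
    rw [hprod, Finset.card_product, Finset.card_univ, Fintype.card_fin]
    rcases s.eq_empty_or_nonempty with rfl | ⟨e0, he0⟩
    · simp
    -- V is nonempty
    have hVne : 1 ≤ V.card := by
      have ha : (Quot.out e0.1).1 ∈ e0.1 := Sym2.out_fst_mem e0.1
      have : (Quot.out e0.1).1 ∈ V := by
        rw [hV, Finset.mem_biUnion]
        exact ⟨e0, he0, by simpa using ha⟩
      exact Finset.card_pos.mpr ⟨_, this⟩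
    set S : Finset (Sym2 α) := s.image Subtype.val with hS
    have hSsub : ∀ e ∈ S, e ∈ G.edgeSet := by
      intro e he
      rw [hS, Finset.mem_image] at he
      obtain ⟨e', -, rfl⟩ := he
      exact SimpleGraph.mem_edgeFinset.mp e'.2
    have hedgevert : ∀ {a b : α}, G.Adj a b ∧ s(a,b) ∈ S → a ∈ (V : Set α) := by
      rintro a b ⟨-, hab⟩
      rw [hS, Finset.mem_image] at hab
      obtain ⟨e', he', heq⟩ := hab
      have : a ∈ (e' : Sym2 α) := by rw [heq]; exact Sym2.mem_mk_left a b
      rw [hV]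
      simp only [Finset.coe_biUnion, Set.mem_iUnion]
      exact ⟨e', he', by simpa using this⟩
    set J : G.Subgraph := {
      verts := ↑V
      Adj := fun a b => G.Adj a b ∧ s(a,b) ∈ S
      adj_sub := fun h => h.1
      edge_vert := fun h => hedgevert h
      symm := ⟨fun a b h => ⟨h.1.symm, by rw [Sym2.eq_swap]; exact h.2⟩⟩ } with hJ
    have hedge : J.edgeSet = ↑S := by
      ext e
      induction e using Sym2.ind with
      | _ a b =>
        rw [SimpleGraph.Subgraph.mem_edgeSet]
        constructor
        · intro h; exact h.2
        · intro h
          refine ⟨?_, h⟩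
          have := hSsub _ h
          rwa [SimpleGraph.mem_edgeSet] at this
    have hecard : J.edgeSet.ncard = s.card := by
      rw [hedge, Set.ncard_coe_finset, hS, Finset.card_image_of_injective _ Subtype.val_injective]
    have hvcard : J.verts.ncard = V.card := by
      rw [hJ]; exact Set.ncard_coe_finset V
    have hmem : ((s.card : ℝ) / (V.card : ℝ)) ∈ Dset := by
      exact ⟨J, by rw [hvcard]; exact hVne, by rw [hecard, hvcard]⟩
    have hle : (s.card : ℝ) / (V.card : ℝ) ≤ (k : ℝ) :=
      le_trans (le_csSup hbdd hmem) hmk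
    have hVpos : (0 : ℝ) < V.card := by exact_mod_cast hVne
    rw [div_le_iff₀ hVpos] at hle
    have : (s.card : ℝ) ≤ ((V.card * k : ℕ) : ℝ) := by push_cast; linarith
    exact_mod_cast this
  obtain ⟨f, hfinj, hft⟩ := (Finset.all_card_le_biUnion_card_iff_exists_injective t).mp hall
  have hmem1 : ∀ (e : {e : Sym2 α // e ∈ G.edgeFinset}), (f e).1 ∈ e.1 := by
    intro e
    have := hft e
    rw [ht, Finset.mem_product] at this
    simpa using this.1
  set head : Sym2 α → α := fun e =>
    if h : e ∈ G.edgeFinset then Sym2.Mem.other (hmem1 ⟨e, h⟩) else (Quot.out e).1 with hhead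
  have hhd : ∀ (e : Sym2 α) (h : e ∈ G.edgeFinset),
      head e = Sym2.Mem.other (hmem1 ⟨e, h⟩) := by
    intro e h; simp only [hhead]; rw [dif_pos h]
  refine ⟨head, ?_, ?_⟩
  · intro e he
    have h : e ∈ G.edgeFinset := SimpleGraph.mem_edgeFinset.mpr he
    rw [hhd e h]
    exact Sym2.other_mem _
  · intro v
    set T : Finset (Sym2 α) := G.edgeFinset.filter (fun e => v ∈ e ∧ head e ≠ v) with hT
    have hset : {e | e ∈ G.edgeSet ∧ v ∈ e ∧ head e ≠ v} = ↑T := by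
      ext e
      simp [hT, Finset.mem_filter, SimpleGraph.mem_edgeFinset]
    rw [hset, Set.ncard_coe_finset]
    have hfst : ∀ (e : Sym2 α) (h : e ∈ G.edgeFinset), v ∈ e → head e ≠ v →
        (f ⟨e, h⟩).1 = v := by
      intro e h hve hne
      have hspec : s((f ⟨e, h⟩).1, Sym2.Mem.other (hmem1 ⟨e, h⟩)) = e :=
        Sym2.other_spec (hmem1 ⟨e, h⟩)
      rw [hhd e h] at hne
      rw [← hspec, Sym2.mem_iff] at hve
      rcases hve with hve | hve
      · exact hve.symm
      · exact absurd hve.symm hne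
    have hcard : T.card ≤ k := by
      rcases T.eq_empty_or_nonempty with h | ⟨e0, he0⟩
      · simp [h]
      · have h0 : e0 ∈ G.edgeFinset := (Finset.mem_filter.mp he0).1
        set g : Sym2 α → Fin k := fun e =>
          if h : e ∈ G.edgeFinset then (f ⟨e, h⟩).2 else (f ⟨e0, h0⟩).2 with hg
        calc T.card ≤ (Finset.univ : Finset (Fin k)).card := by
              apply Finset.card_le_card_of_injOn g (fun _ _ => Finset.mem_univ _)
              intro e1 h1 e2 h2 hgeq
              rw [Finset.mem_coe, hT, Finset.mem_filter] at h1 h2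
              obtain ⟨he1, hv1, hn1⟩ := h1
              obtain ⟨he2, hv2, hn2⟩ := h2
              rw [hg] at hgeq
              simp only [dif_pos he1, dif_pos he2] at hgeq
              have h1' := hfst e1 he1 hv1 hn1
              have h2' := hfst e2 he2 hv2 hn2
              have : f ⟨e1, he1⟩ = f ⟨e2, he2⟩ := Prod.ext (h1'.trans h2'.symm) hgeq
              exact congrArg Subtype.val (hfinj this)
          _ = k := by simp
    calc (T.card : ℤ) ≤ (k : ℤ) := by exact_mod_cast hcard
      _ = ⌈mDensity G⌉ := hkZ


end HGamePaper
end
end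

section
/- For all graphs G and H (H having at least one edge), the H-core of G is unique: there is exactly one subgraph G' ⊆ G that is maximal with respect to inclusion among subgraphs with the properties that every edge of G' is contained in at least one copy of H in G' and every copy of H in G' is problematic. -/
open scoped Classical

noncomputable section

namespace HGamePaper

/-! ### Maker-Breaker games -/

variable {X : Type*} {α β : Type*}

lemma isCopy_mono {α β : Type*} {H : SimpleGraph β} {G₁ G₂ : SimpleGraph α}
    (hle : G₁ ≤ G₂) {A : Set (Sym2 α)} (h : IsCopy H G₁ A) : IsCopy H G₂ A := by
  obtain ⟨f, hf, rfl⟩ := h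
  exact ⟨f, fun u v h' => hle (hf u v h'), rfl⟩

lemma isCopy_subset_edgeSet {α β : Type*} {H : SimpleGraph β} {G : SimpleGraph α}
    {A : Set (Sym2 α)} (h : IsCopy H G A) : A ⊆ G.edgeSet := by
  obtain ⟨f, hf, rfl⟩ := h
  rintro _ ⟨s, hs, rfl⟩
  induction s with
  | _ u v =>
    rw [Sym2.map_pair_eq, G.mem_edgeSet]
    exact hf u v (H.mem_edgeSet.mp hs)

lemma coreProps_bot {α β : Type*} {H : SimpleGraph β} (hne : H.edgeSet.Nonempty) :
    CoreProps H (⊥ : SimpleGraph α) := by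
  have hnocopy : ∀ A : Set (Sym2 α), ¬ IsCopy H (⊥ : SimpleGraph α) A := by
    rintro A ⟨f, hf, rfl⟩
    obtain ⟨e, he⟩ := hne
    induction e with
    | _ u v => exact hf u v (H.mem_edgeSet.mp he)
  constructor
  · intro e he
    simp at he
  · intro A hA
    exact absurd hA (hnocopy A)

lemma no_unprob_aux {α β : Type*} {H : SimpleGraph β} {G₁ G₂ : SimpleGraph α}
    (h1 : CoreProps H G₁) {A : Set (Sym2 α)} (hA : IsCopy H (G₁ ⊔ G₂) A)
    {e₁ e₂ : Sym2 α} (he₁ : e₁ ∈ A) (he₂ : e₂ ∈ A) (h12 : e₁ ≠ e₂)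
    (ho₁ : OpenEdge H (G₁ ⊔ G₂) e₁) (ho₂ : OpenEdge H (G₁ ⊔ G₂) e₂)
    (hm : e₁ ∈ G₁.edgeSet) : False := by
  obtain ⟨B, hB, huniq⟩ := ho₁
  have hAB : A = B := huniq A ⟨hA, he₁⟩
  -- the copy of H in G₁ containing e₁ must be A itself
  obtain ⟨A₁, hA₁copy, he₁A₁⟩ := h1.1 e₁ hm
  have hA₁B : A₁ = B := huniq A₁ ⟨isCopy_mono le_sup_left hA₁copy, he₁A₁⟩
  have hA₁A : A₁ = A := hA₁B.trans hAB.symm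
  have hAcopy₁ : IsCopy H G₁ A := hA₁A ▸ hA₁copy
  have hAsub : A ⊆ G₁.edgeSet := isCopy_subset_edgeSet hAcopy₁
  -- e₁ is open in G₁
  have ho₁' : OpenEdge H G₁ e₁ := by
    refine ⟨A, ⟨hAcopy₁, he₁⟩, ?_⟩
    rintro C ⟨hC, heC⟩
    exact (huniq C ⟨isCopy_mono le_sup_left hC, heC⟩).trans hAB.symm
  -- e₂ is open in G₁
  obtain ⟨B', hB', huniq'⟩ := ho₂
  have hAB' : A = B' := huniq' A ⟨hA, he₂⟩
  have ho₂' : OpenEdge H G₁ e₂ := by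
    refine ⟨A, ⟨hAcopy₁, he₂⟩, ?_⟩
    rintro C ⟨hC, heC⟩
    exact (huniq' C ⟨isCopy_mono le_sup_left hC, heC⟩).trans hAB'.symm
  exact h1.2 A hAcopy₁ ⟨e₁, he₁, e₂, he₂, h12, ho₁', ho₂'⟩

lemma coreProps_sup {α β : Type*} {H : SimpleGraph β} {G₁ G₂ : SimpleGraph α}
    (h1 : CoreProps H G₁) (h2 : CoreProps H G₂) : CoreProps H (G₁ ⊔ G₂) := by
  constructor
  · intro e he
    rw [SimpleGraph.edgeSet_sup] at he
    rcases he with he | he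
    · obtain ⟨A, hA, heA⟩ := h1.1 e he
      exact ⟨A, isCopy_mono le_sup_left hA, heA⟩
    · obtain ⟨A, hA, heA⟩ := h2.1 e he
      exact ⟨A, isCopy_mono le_sup_right hA, heA⟩
  · rintro A hA ⟨e₁, he₁, e₂, he₂, h12, ho₁, ho₂⟩
    have he₁G : e₁ ∈ (G₁ ⊔ G₂).edgeSet := isCopy_subset_edgeSet hA he₁
    rw [SimpleGraph.edgeSet_sup] at he₁G
    rcases he₁G with hm | hm
    · exact no_unprob_aux h1 hA he₁ he₂ h12 ho₁ ho₂ hm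
    · rw [sup_comm] at hA ho₁ ho₂
      exact no_unprob_aux h2 hA he₁ he₂ h12 ho₁ ho₂ hm

/-- For all graphs `G` and `H` (`H` having at least one edge),
there is exactly one `H`-core of `G`, i.e. exactly one subgraph `G' ⊆ G` maximal with
respect to inclusion among subgraphs in which every edge lies in a copy of `H` and
every copy of `H` is problematic. -/
theorem H_core_unique {α β : Type*} [Fintype α] [Fintype β]
    (G : SimpleGraph α) (H : SimpleGraph β) (hne : H.edgeSet.Nonempty) :
    ∃! G' : SimpleGraph α, IsHCore H G G' := by
  have hfin : (Set.univ : Set (SimpleGraph α)).Finite := Set.finite_univ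
  set S : Set (SimpleGraph α) := {K | K ≤ G ∧ CoreProps H K} with hS
  have hSfin : S.Finite := Set.toFinite S
  set t : Finset (SimpleGraph α) := hSfin.toFinset with ht
  set G' : SimpleGraph α := t.sup id with hG'
  have hmem : ∀ K, K ≤ G → CoreProps H K → K ≤ G' := by
    intro K hKG hKcp
    exact Finset.le_sup (f := id) (hSfin.mem_toFinset.mpr ⟨hKG, hKcp⟩)
  have hG'le : G' ≤ G := by
    refine Finset.sup_le fun K hK => ?_
    exact (hSfin.mem_toFinset.mp hK).1
  have hG'cp : CoreProps H G' := by
    refine Finset.sup_induction (coreProps_bot hne) (fun a ha b hb => coreProps_sup ha hb) ?_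
    intro K hK
    exact (hSfin.mem_toFinset.mp hK).2
  refine ⟨G', ⟨hG'le, hG'cp, ?_⟩, ?_⟩
  · intro G'' hG''G hG'G'' hcp''
    exact le_antisymm (hmem G'' hG''G hcp'') hG'G''
  · rintro K ⟨hKG, hKcp, hKmax⟩
    exact (hKmax G' hG'le (hmem K hKG hKcp) hG'cp).symm

end HGamePaper
end
end

section
/- If H is a strictly 2-balanced graph with at least 4 vertices, then m_2(H) < δ(H), where δ(H) denotes the minimum degree of H. -/
open scoped Classical

noncomputable section

namespace HGamePaper

/-! ### Maker-Breaker games -/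

variable {X : Type*} {α β : Type*}

/-- If `H` is strictly 2-balanced with at least 4 vertices, then
`m₂(H) < δ(H)`. -/
theorem m2_lt_minDegree {β : Type*} [Fintype β] (H : SimpleGraph β)
    (hbal : IsStrictlyTwoBalanced H) (hv : 4 ≤ Nat.card β) :
    m2 H < (H.minDegree : ℝ) := by
  classical
  have hne : Nonempty β := by
    rw [Nat.card_eq_fintype_card] at hv
    exact Fintype.card_pos_iff.mp (by omega)
  obtain ⟨v, hvdeg⟩ := H.exists_minimal_degree_vertex
  set J : H.Subgraph := (⊤ : H.Subgraph).deleteVerts {v} with hJdef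
  have hverts : J.verts = (Set.univ \ {v} : Set β) := by
    simp [hJdef, SimpleGraph.Subgraph.deleteVerts_verts]
  have hvcard : J.verts.ncard = Nat.card β - 1 := by
    rw [hverts]
    rw [Set.ncard_diff (by simp)]
    simp [Set.ncard_univ]
  have h3 : 3 ≤ J.verts.ncard := by omega
  have hneq : J ≠ ⊤ := by
    intro h
    have : v ∈ J.verts := by rw [h]; simp
    rw [hverts] at this
    simp at this
  have hE : J.edgeSet = H.edgeSet \ H.incidenceSet v := by
    ext e
    induction e with
    | h a b =>
      simp only [SimpleGraph.Subgraph.mem_edgeSet, hJdef,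
        SimpleGraph.Subgraph.deleteVerts_adj, SimpleGraph.Subgraph.top_adj,
        Set.mem_diff, SimpleGraph.mem_edgeSet, SimpleGraph.incidenceSet,
        Set.mem_sep_iff, Sym2.mem_iff]
      constructor
      · rintro ⟨_, ha, _, hb, hadj⟩
        exact ⟨hadj, fun ⟨_, h⟩ => by rcases h with h | h <;> simp_all⟩
      · rintro ⟨hadj, h⟩
        push_neg at h
        have := h hadj
        refine ⟨trivial, ?_, trivial, ?_, hadj⟩ <;> simp_all [eq_comm]
  have hIsub : H.incidenceSet v ⊆ H.edgeSet := H.incidenceSet_subset v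
  have hIcard : (H.incidenceSet v).ncard = H.degree v := by
    rw [Set.ncard_eq_toFinset_card', ← SimpleGraph.card_incidenceFinset_eq_degree]
    congr 1
  have hEcard : J.edgeSet.ncard = numEdges H - H.degree v := by
    rw [hE, Set.ncard_diff hIsub, hIcard]; rfl
  have hdle : H.degree v ≤ numEdges H := by
    rw [← hIcard]
    exact Set.ncard_le_ncard hIsub (Set.toFinite _)
  have hlt : subD2 J < m2 H := hbal.2 J hneq h3
  rw [hbal.1] at hlt
  rw [hvdeg, hbal.1]
  unfold subD2 d2 at hlt
  unfold d2
  rw [hvcard, hEcard] at hlt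
  set n := Nat.card β
  set e := numEdges H
  set d := H.degree v
  have hcast1 : ((e - d : ℕ) : ℝ) = (e : ℝ) - d := by
    push_cast [hdle]; ring
  have hcast2 : ((n - 1 : ℕ) : ℝ) = (n : ℝ) - 1 := by
    push_cast [show 1 ≤ n by omega]; ring
  rw [hcast1, hcast2] at hlt
  have hn4 : (4 : ℝ) ≤ (n : ℝ) := by exact_mod_cast hv
  rw [div_lt_div_iff₀ (by linarith) (by linarith)] at hlt
  rw [div_lt_iff₀ (by linarith)]
  nlinarith

end HGamePaper
end
end

section
/- Let (X, 𝓔) be a finite hypergraph such that Σ_{A ∈ 𝓔} 2^{−|A|} < 1. Then Breaker, moving first, has a winning strategy in the Maker–Breaker game on (X, 𝓔). -/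
open scoped Classical

noncomputable section

namespace HGamePaper

/-! ### Maker-Breaker games -/

variable {X : Type*} {α β : Type*}

section ES

variable {X : Type*} [DecidableEq X]

/-- weight of a set `A` given Maker's claimed set. -/
def wgt (claimed A : Finset X) : ℝ := ((2 : ℝ) ^ (A \ claimed).card)⁻¹

lemma wgt_pos (claimed A : Finset X) : 0 < wgt claimed A := by
  unfold wgt; positivity

/-- potential of a position -/
def pot (𝓔 : Finset (Finset X)) (rem claimed : Finset X) : ℝ :=
  ∑ A ∈ 𝓔.filter (fun A => A ⊆ rem ∪ claimed), wgt claimed A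

/-- value of a move -/
def mv (𝓔 : Finset (Finset X)) (rem claimed : Finset X) (y : X) : ℝ :=
  ∑ A ∈ 𝓔.filter (fun A => A ⊆ rem ∪ claimed ∧ y ∈ A \ claimed), wgt claimed A

lemma mv_nonneg (𝓔 : Finset (Finset X)) (rem claimed : Finset X) (y : X) :
    0 ≤ mv 𝓔 rem claimed y :=
  Finset.sum_nonneg fun A _ => (wgt_pos claimed A).le

lemma one_le_pot (𝓔 : Finset (Finset X)) (rem claimed A : Finset X)
    (hA : A ∈ 𝓔) (hsub : A ⊆ claimed) : 1 ≤ pot 𝓔 rem claimed := by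
  have hmem : A ∈ 𝓔.filter (fun A => A ⊆ rem ∪ claimed) :=
    Finset.mem_filter.mpr ⟨hA, hsub.trans Finset.subset_union_right⟩
  have h1 : wgt claimed A = 1 := by
    unfold wgt
    rw [Finset.sdiff_eq_empty_iff_subset.mpr hsub]
    simp
  calc (1 : ℝ) = wgt claimed A := h1.symm
    _ ≤ pot 𝓔 rem claimed :=
      Finset.single_le_sum (fun i _ => (wgt_pos claimed i).le) hmem

lemma subset_erase_union_iff (rem claimed A : Finset X) (x : X) :
    A ⊆ rem.erase x ∪ claimed ↔ A ⊆ rem ∪ claimed ∧ x ∉ A \ claimed := by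
  constructor
  · intro hsub
    refine ⟨hsub.trans (Finset.union_subset_union_left (Finset.erase_subset _ _)), ?_⟩
    intro hx
    rw [Finset.mem_sdiff] at hx
    rcases Finset.mem_union.mp (hsub hx.1) with h | h
    · exact (Finset.mem_erase.mp h).1 rfl
    · exact hx.2 h
  · rintro ⟨hsub, hx⟩ a ha
    rcases Finset.mem_union.mp (hsub ha) with h | h
    · by_cases hac : a ∈ claimed
      · exact Finset.mem_union_right _ hac
      · refine Finset.mem_union_left _ (Finset.mem_erase.mpr ⟨?_, h⟩)
        rintro rfl
        exact hx (Finset.mem_sdiff.mpr ⟨ha, hac⟩)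
    · exact Finset.mem_union_right _ h

lemma breaker_step (𝓔 : Finset (Finset X)) (rem claimed : Finset X) (x : X) :
    pot 𝓔 (rem.erase x) claimed = pot 𝓔 rem claimed - mv 𝓔 rem claimed x := by
  have hsplit := Finset.sum_filter_add_sum_filter_not
    (𝓔.filter (fun A => A ⊆ rem ∪ claimed)) (fun A => x ∈ A \ claimed) (wgt claimed)
  rw [Finset.filter_filter, Finset.filter_filter] at hsplit
  have h1 : pot 𝓔 (rem.erase x) claimed
      = ∑ A ∈ 𝓔.filter (fun A => A ⊆ rem ∪ claimed ∧ x ∉ A \ claimed), wgt claimed A := by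
    unfold pot
    congr 1
    apply Finset.filter_congr
    intro A _
    simp [subset_erase_union_iff]
  rw [h1]
  unfold pot mv
  rw [← hsplit]
  ring

lemma wgt_insert (claimed A : Finset X) (y : X) :
    wgt (insert y claimed) A
      = wgt claimed A + (if y ∈ A \ claimed then wgt claimed A else 0) := by
  unfold wgt
  rw [Finset.sdiff_insert]
  by_cases hy : y ∈ A \ claimed
  · rw [if_pos hy]
    have hcard : (A \ claimed).card = ((A \ claimed).erase y).card + 1 :=
      (Finset.card_erase_add_one hy).symm
    rw [hcard, pow_succ]
    have h2 : ((2:ℝ) ^ ((A \ claimed).erase y).card) ≠ 0 := by positivity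
    field_simp
    ring
  · rw [if_neg hy, Finset.erase_eq_of_notMem hy]
    simp

lemma maker_step (𝓔 : Finset (Finset X)) (rem claimed : Finset X) (y : X) (hy : y ∈ rem) :
    pot 𝓔 (rem.erase y) (insert y claimed)
      = pot 𝓔 rem claimed + mv 𝓔 rem claimed y := by
  have hunion : rem.erase y ∪ insert y claimed = rem ∪ claimed := by
    ext a
    simp only [Finset.mem_union, Finset.mem_erase, Finset.mem_insert]
    constructor
    · rintro (⟨_, h⟩ | rfl | h) <;> [exact Or.inl h; exact Or.inl hy; exact Or.inr h]
    · rintro (h | h)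
      · by_cases hay : a = y
        · exact Or.inr (Or.inl hay)
        · exact Or.inl ⟨hay, h⟩
      · exact Or.inr (Or.inr h)
  unfold pot mv
  rw [hunion]
  calc ∑ A ∈ 𝓔.filter (fun A => A ⊆ rem ∪ claimed), wgt (insert y claimed) A
      = ∑ A ∈ 𝓔.filter (fun A => A ⊆ rem ∪ claimed),
          (wgt claimed A + if y ∈ A \ claimed then wgt claimed A else 0) :=
        Finset.sum_congr rfl fun A _ => wgt_insert claimed A y
    _ = ∑ A ∈ 𝓔.filter (fun A => A ⊆ rem ∪ claimed), wgt claimed A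
        + ∑ A ∈ (𝓔.filter (fun A => A ⊆ rem ∪ claimed)).filter (fun A => y ∈ A \ claimed),
            wgt claimed A := by
        rw [Finset.sum_add_distrib]
        congr 1
        exact (Finset.sum_filter _ _).symm
    _ = ∑ A ∈ 𝓔.filter (fun A => A ⊆ rem ∪ claimed), wgt claimed A
        + ∑ A ∈ 𝓔.filter (fun A => A ⊆ rem ∪ claimed ∧ y ∈ A \ claimed), wgt claimed A := by
        rw [Finset.filter_filter]

lemma mv_mono (𝓔 : Finset (Finset X)) (rem claimed : Finset X) (x y : X) :
    mv 𝓔 (rem.erase x) claimed y ≤ mv 𝓔 rem claimed y := by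
  apply Finset.sum_le_sum_of_subset_of_nonneg
  · apply Finset.monotone_filter_right
    rintro A _ ⟨h1, h2⟩
    exact ⟨h1.trans (Finset.union_subset_union_left (Finset.erase_subset _ _)), h2⟩
  · exact fun A _ _ => (wgt_pos claimed A).le

lemma es_key (𝓔 : Finset (Finset X)) (k : ℕ) :
    ∀ (rem claimed : Finset X) (t : Bool), rem.card = k →
    pot 𝓔 rem claimed < 1 →
    (t = true → ∀ y ∈ rem, pot 𝓔 rem claimed + mv 𝓔 rem claimed y < 1) →
    BreakerWinsAux {A : Finset X | A ∈ 𝓔} k rem claimed t := by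
  induction k with
  | zero =>
    intro rem claimed t _ hpot _
    simp only [BreakerWinsAux]
    rintro ⟨A, hA, hsub⟩
    exact absurd hpot (not_lt.mpr (one_le_pot 𝓔 rem claimed A hA hsub))
  | succ k ih =>
    intro rem claimed t hcard hpot hmk
    have hne : rem ≠ ∅ := by
      intro h; rw [h] at hcard; simp at hcard
    simp only [BreakerWinsAux, if_neg hne]
    cases t with
    | true =>
      simp only [if_pos rfl]
      intro y hy
      apply ih
      · rw [Finset.card_erase_of_mem hy, hcard]; omega
      · rw [maker_step 𝓔 rem claimed y hy]
        exact hmk rfl y hy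
      · intro h; simp at h
    | false =>
      simp only [Bool.false_eq_true, if_neg (by simp : ¬False)]
      obtain ⟨x, hx, hmax⟩ := Finset.exists_max_image rem (mv 𝓔 rem claimed)
        (Finset.nonempty_iff_ne_empty.mpr hne)
      refine ⟨x, hx, ?_⟩
      apply ih
      · rw [Finset.card_erase_of_mem hx, hcard]; omega
      · rw [breaker_step]
        have := mv_nonneg 𝓔 rem claimed x
        linarith
      · intro _ y hy
        rw [breaker_step]
        have h1 : mv 𝓔 (rem.erase x) claimed y ≤ mv 𝓔 rem claimed y :=
          mv_mono 𝓔 rem claimed x y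
        have h2 : mv 𝓔 rem claimed y ≤ mv 𝓔 rem claimed x :=
          hmax y (Finset.mem_of_mem_erase hy)
        linarith

end ES

/-- Erdős–Selfridge criterion. Let `(X, 𝓔)` be a finite hypergraph
with `∑_{A ∈ 𝓔} 2^{-|A|} < 1`. Then Breaker, moving first, has a winning strategy in
the Maker–Breaker game on `(X, 𝓔)`. -/
theorem erdos_selfridge {X : Type*} [Fintype X] [DecidableEq X]
    (𝓔 : Finset (Finset X))
    (h : ∑ A ∈ 𝓔, ((2 : ℝ) ^ A.card)⁻¹ < 1) :
    BreakerWins (Finset.univ : Finset X) {A : Finset X | A ∈ 𝓔} false := by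
  apply es_key 𝓔 (Finset.univ : Finset X).card Finset.univ ∅ false rfl
  · unfold pot wgt
    rw [Finset.filter_true_of_mem (fun A _ => by simp)]
    simpa using h
  · intro hcontra; simp at hcontra

end HGamePaper
end
end
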